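/- Let S be a real symmetric N×N matrix, a, b, g, p real polynomials, and σ, τ real numbers. Let d, e, ẽ be random vectors in ℝ^N with square-integrable components such that E[d] = 0, E[d dᵀ] = p(S), E[e] = 0, E[e eᵀ] = I, E[ẽ] = 0, E[ẽ ẽᵀ] = I, and E[d eᵀ] = E[d ẽᵀ] = E[e ẽᵀ] = 0. Define the one-step Kalman error d' = (I − g(S) b(S))(a(S) d − σ e) + τ g(S) ẽ. Then E[d'] = 0 and E[d' d'ᵀ] = q(S) where q is the polynomial q = (1 − g·b)² (a² p + σ²) + τ² g²; in particular the Kalman estimation error d' is a stationary graph signal. -/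

import Mathlib

open MeasureTheory Polynomial Matrix

/-- The mean (componentwise expectation) of a random vector. -/
noncomputable def meanVec {Ω : Type*} [MeasurableSpace Ω] (μ : Measure Ω) {N : ℕ}
    (x : Ω → Fin N → ℝ) : Fin N → ℝ :=
  fun i => ∫ ω, x ω i ∂μ

/-- The (cross-)covariance matrix `E[x yᵀ]` of random vectors with zero mean. -/
noncomputable def covMat {Ω : Type*} [MeasurableSpace Ω] (μ : Measure Ω) {N : ℕ}
    (x y : Ω → Fin N → ℝ) : Matrix (Fin N) (Fin N) ℝ :=
  Matrix.of fun i j => ∫ ω, x ω i * y ω j ∂μ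

section Aux

variable {Ω : Type*} [MeasurableSpace Ω] {μ : Measure Ω} {N : ℕ}

lemma aux_integrable_mul {f g : Ω → ℝ} (hf : MemLp f 2 μ) (hg : MemLp g 2 μ) :
    Integrable (fun ω => f ω * g ω) μ := by
  have h := hg.smul hf (p := 2) (q := 2) (r := 1)
  rw [memLp_one_iff_integrable] at h
  exact h

lemma mulVec_comp_eq (M : Matrix (Fin N) (Fin N) ℝ) (x : Ω → Fin N → ℝ) (i : Fin N) :
    (fun ω => M.mulVec (x ω) i) = fun ω => ∑ k, M i k * x ω k := by
  funext ω; simp [Matrix.mulVec, dotProduct]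

lemma aux_integrable_mulVec (M : Matrix (Fin N) (Fin N) ℝ) (x : Ω → Fin N → ℝ)
    (hx : ∀ k, Integrable (fun ω => x ω k) μ) (i : Fin N) :
    Integrable (fun ω => M.mulVec (x ω) i) μ := by
  rw [mulVec_comp_eq]
  exact integrable_finset_sum _ (fun k _ => (hx k).const_mul _)

lemma aux_integral_mulVec (M : Matrix (Fin N) (Fin N) ℝ) (x : Ω → Fin N → ℝ)
    (hx : ∀ k, Integrable (fun ω => x ω k) μ) (i : Fin N) :
    ∫ ω, M.mulVec (x ω) i ∂μ = M.mulVec (meanVec μ x) i := by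
  have h := mulVec_comp_eq (Ω := Ω) M x i
  calc ∫ ω, M.mulVec (x ω) i ∂μ = ∫ ω, ∑ k, M i k * x ω k ∂μ := by rw [h]
    _ = ∑ k, ∫ ω, M i k * x ω k ∂μ := integral_finset_sum _ (fun k _ => (hx k).const_mul _)
    _ = ∑ k, M i k * ∫ ω, x ω k ∂μ := by simp only [integral_const_mul]
    _ = M.mulVec (meanVec μ x) i := by simp [Matrix.mulVec, dotProduct, meanVec]

lemma mulVec_mul_comp_eq (M M' : Matrix (Fin N) (Fin N) ℝ) (x y : Ω → Fin N → ℝ) (i j : Fin N) :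
    (fun ω => M.mulVec (x ω) i * M'.mulVec (y ω) j)
      = fun ω => ∑ k, ∑ l, (M i k * M' j l) * (x ω k * y ω l) := by
  funext ω
  simp only [Matrix.mulVec, dotProduct]
  rw [Finset.sum_mul_sum]
  exact Finset.sum_congr rfl fun k _ => Finset.sum_congr rfl fun l _ => by ring

lemma aux_integrable_mulVec_mul (M M' : Matrix (Fin N) (Fin N) ℝ) (x y : Ω → Fin N → ℝ)
    (hx : ∀ k, MemLp (fun ω => x ω k) 2 μ) (hy : ∀ k, MemLp (fun ω => y ω k) 2 μ) (i j : Fin N) :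
    Integrable (fun ω => M.mulVec (x ω) i * M'.mulVec (y ω) j) μ := by
  rw [mulVec_mul_comp_eq]
  exact integrable_finset_sum _ fun k _ => integrable_finset_sum _ fun l _ =>
    (aux_integrable_mul (hx k) (hy l)).const_mul _

lemma aux_integral_mulVec_mul (M M' : Matrix (Fin N) (Fin N) ℝ) (x y : Ω → Fin N → ℝ)
    (hx : ∀ k, MemLp (fun ω => x ω k) 2 μ) (hy : ∀ k, MemLp (fun ω => y ω k) 2 μ) (i j : Fin N) :
    ∫ ω, M.mulVec (x ω) i * M'.mulVec (y ω) j ∂μ = (M * covMat μ x y * M'ᵀ) i j := by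
  have h := mulVec_mul_comp_eq (Ω := Ω) M M' x y i j
  calc ∫ ω, M.mulVec (x ω) i * M'.mulVec (y ω) j ∂μ
      = ∫ ω, ∑ k, ∑ l, (M i k * M' j l) * (x ω k * y ω l) ∂μ := by rw [h]
    _ = ∑ k, ∑ l, (M i k * M' j l) * ∫ ω, x ω k * y ω l ∂μ := by
        rw [integral_finset_sum _ fun k _ => integrable_finset_sum _ fun l _ =>
          (aux_integrable_mul (hx k) (hy l)).const_mul _]
        refine Finset.sum_congr rfl fun k _ => ?_
        rw [integral_finset_sum _ fun l _ => (aux_integrable_mul (hx k) (hy l)).const_mul _]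
        exact Finset.sum_congr rfl fun l _ => integral_const_mul _ _
    _ = (M * covMat μ x y * M'ᵀ) i j := by
        simp only [Matrix.mul_apply, Matrix.transpose_apply, covMat, Matrix.of_apply,
          Finset.sum_mul, Finset.mul_sum]
        rw [Finset.sum_comm]
        exact Finset.sum_congr rfl fun k _ => Finset.sum_congr rfl fun l _ => by ring

lemma covMat_swap (x y : Ω → Fin N → ℝ) : covMat μ y x = (covMat μ x y)ᵀ := by
  ext i j
  simp only [covMat, Matrix.of_apply, Matrix.transpose_apply]
  exact integral_congr_ae (Filter.Eventually.of_forall fun ω => mul_comm _ _)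

lemma aeval_transpose {S : Matrix (Fin N) (Fin N) ℝ} (hS : S.IsSymm) (r : Polynomial ℝ) :
    (aeval S r)ᵀ = aeval S r := by
  rw [aeval_eq_sum_range]
  rw [Matrix.transpose_sum]
  exact Finset.sum_congr rfl fun n _ => by
    rw [Matrix.transpose_smul, Matrix.transpose_pow, hS]

lemma integral_add9 {t1 t2 t3 t4 t5 t6 t7 t8 t9 : Ω → ℝ}
    (h1 : Integrable t1 μ) (h2 : Integrable t2 μ) (h3 : Integrable t3 μ)
    (h4 : Integrable t4 μ) (h5 : Integrable t5 μ) (h6 : Integrable t6 μ)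
    (h7 : Integrable t7 μ) (h8 : Integrable t8 μ) (h9 : Integrable t9 μ) :
    ∫ ω, t1 ω + t2 ω + t3 ω + t4 ω + t5 ω + t6 ω + t7 ω + t8 ω + t9 ω ∂μ
      = (∫ ω, t1 ω ∂μ) + (∫ ω, t2 ω ∂μ) + (∫ ω, t3 ω ∂μ) + (∫ ω, t4 ω ∂μ)
        + (∫ ω, t5 ω ∂μ) + (∫ ω, t6 ω ∂μ) + (∫ ω, t7 ω ∂μ) + (∫ ω, t8 ω ∂μ)
        + (∫ ω, t9 ω ∂μ) := by
  have h12 : Integrable (fun ω => t1 ω + t2 ω) μ := h1.add h2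
  have h13 : Integrable (fun ω => t1 ω + t2 ω + t3 ω) μ := h12.add h3
  have h14 : Integrable (fun ω => t1 ω + t2 ω + t3 ω + t4 ω) μ := h13.add h4
  have h15 : Integrable (fun ω => t1 ω + t2 ω + t3 ω + t4 ω + t5 ω) μ := h14.add h5
  have h16 : Integrable (fun ω => t1 ω + t2 ω + t3 ω + t4 ω + t5 ω + t6 ω) μ := h15.add h6
  have h17 : Integrable (fun ω => t1 ω + t2 ω + t3 ω + t4 ω + t5 ω + t6 ω + t7 ω) μ := h16.add h7
  have h18 : Integrable (fun ω => t1 ω + t2 ω + t3 ω + t4 ω + t5 ω + t6 ω + t7 ω + t8 ω) μ :=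
    h17.add h8
  rw [integral_add h18 h9, integral_add h17 h8, integral_add h16 h7, integral_add h15 h6,
      integral_add h14 h5, integral_add h13 h4, integral_add h12 h3, integral_add h1 h2]

end Aux

/-- One-step Kalman error propagation with polynomial filters. If `d` has zero
mean and covariance `p(S)`, and `e`, `ẽ` are standard white noises with all cross-covariances
among `d`, `e`, `ẽ` vanishing, then `d' = (I − g(S)b(S))(a(S) d − σ e) + τ g(S) ẽ` has zero
mean and covariance `q(S)` with `q = (1 − g·b)² (a² p + σ²) + τ² g²`; in particular the Kalman
estimation error is a stationary graph signal. -/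
theorem kalman_one_step_error_stationary
    {Ω : Type*} [MeasurableSpace Ω] (μ : Measure Ω) [IsProbabilityMeasure μ]
    {N : ℕ} (S : Matrix (Fin N) (Fin N) ℝ) (hS : S.IsSymm)
    (a b g p : Polynomial ℝ) (σ τ : ℝ)
    (d e et : Ω → Fin N → ℝ)
    (hdL2 : ∀ i, MemLp (fun ω => d ω i) 2 μ)
    (heL2 : ∀ i, MemLp (fun ω => e ω i) 2 μ)
    (hetL2 : ∀ i, MemLp (fun ω => et ω i) 2 μ)
    (hdMean : meanVec μ d = 0) (hdCov : covMat μ d d = aeval S p)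
    (heMean : meanVec μ e = 0) (heCov : covMat μ e e = 1)
    (hetMean : meanVec μ et = 0) (hetCov : covMat μ et et = 1)
    (hde : covMat μ d e = 0) (hdet : covMat μ d et = 0) (heet : covMat μ e et = 0)
    (d' : Ω → Fin N → ℝ)
    (hd' : ∀ ω, d' ω = (1 - aeval S g * aeval S b).mulVec ((aeval S a).mulVec (d ω) - σ • e ω)
      + τ • (aeval S g).mulVec (et ω)) :
    meanVec μ d' = 0 ∧
      covMat μ d' d' = aeval S ((1 - g * b) ^ 2 * (a ^ 2 * p + C (σ ^ 2)) + C (τ ^ 2) * g ^ 2) := by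
  set MA : Matrix (Fin N) (Fin N) ℝ := aeval S ((1 - g * b) * a) with hMA
  set Mt : Matrix (Fin N) (Fin N) ℝ := aeval S (1 - g * b) with hMt
  set G : Matrix (Fin N) (Fin N) ℝ := aeval S g with hG
  have hMtval : Mt = 1 - aeval S g * aeval S b := by rw [hMt]; simp [map_sub, _root_.map_mul]
  have hMAval : MA = Mt * aeval S a := by rw [hMA, hMtval]; simp [map_sub, _root_.map_mul]
  have hcomp : ∀ ω i, d' ω i
      = MA.mulVec (d ω) i + (-σ) * Mt.mulVec (e ω) i + τ * G.mulVec (et ω) i := by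
    intro ω i
    rw [hd' ω, ← hMtval]
    simp only [Matrix.mulVec_sub, hMAval, Pi.add_apply, Pi.sub_apply, Pi.smul_apply,
      smul_eq_mul, Matrix.mulVec_smul, Matrix.mulVec_mulVec]
    ring
  have hdInt : ∀ k, Integrable (fun ω => d ω k) μ := fun k => (hdL2 k).integrable one_le_two
  have heInt : ∀ k, Integrable (fun ω => e ω k) μ := fun k => (heL2 k).integrable one_le_two
  have hetInt : ∀ k, Integrable (fun ω => et ω k) μ := fun k => (hetL2 k).integrable one_le_two
  constructor
  · funext i
    have h1 := aux_integrable_mulVec MA d hdInt i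
    have h2 := aux_integrable_mulVec Mt e heInt i
    have h3 := aux_integrable_mulVec G et hetInt i
    have : meanVec μ d' i = ∫ ω, MA.mulVec (d ω) i + (-σ) * Mt.mulVec (e ω) i
        + τ * G.mulVec (et ω) i ∂μ := by
      simp only [meanVec]
      exact integral_congr_ae (Filter.Eventually.of_forall fun ω => hcomp ω i)
    have h2' : Integrable (fun ω => (-σ) * Mt.mulVec (e ω) i) μ := h2.const_mul _
    have h3' : Integrable (fun ω => τ * G.mulVec (et ω) i) μ := h3.const_mul _
    have h12 : Integrable (fun ω => MA.mulVec (d ω) i + (-σ) * Mt.mulVec (e ω) i) μ := h1.add h2'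
    rw [this, integral_add h12 h3', integral_add h1 h2', integral_const_mul, integral_const_mul,
        aux_integral_mulVec MA d hdInt i, aux_integral_mulVec Mt e heInt i,
        aux_integral_mulVec G et hetInt i, hdMean, heMean, hetMean]
    simp
  · have hed : covMat μ e d = 0 := by rw [covMat_swap, hde, Matrix.transpose_zero]
    have hetd : covMat μ et d = 0 := by rw [covMat_swap, hdet, Matrix.transpose_zero]
    have hete : covMat μ et e = 0 := by rw [covMat_swap, heet, Matrix.transpose_zero]
    ext i j
    have hexp : (fun ω => d' ω i * d' ω j) = fun ω =>
        MA.mulVec (d ω) i * MA.mulVec (d ω) j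
        + (-σ) * (MA.mulVec (d ω) i * Mt.mulVec (e ω) j)
        + τ * (MA.mulVec (d ω) i * G.mulVec (et ω) j)
        + (-σ) * (Mt.mulVec (e ω) i * MA.mulVec (d ω) j)
        + (σ * σ) * (Mt.mulVec (e ω) i * Mt.mulVec (e ω) j)
        + (-σ * τ) * (Mt.mulVec (e ω) i * G.mulVec (et ω) j)
        + τ * (G.mulVec (et ω) i * MA.mulVec (d ω) j)
        + (τ * -σ) * (G.mulVec (et ω) i * Mt.mulVec (e ω) j)
        + (τ * τ) * (G.mulVec (et ω) i * G.mulVec (et ω) j) := by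
      funext ω
      rw [hcomp ω i, hcomp ω j]
      ring
    have covEq : covMat μ d' d' i j
        = (MA * covMat μ d d * MAᵀ) i j
          + (-σ) * (MA * covMat μ d e * Mtᵀ) i j
          + τ * (MA * covMat μ d et * Gᵀ) i j
          + (-σ) * (Mt * covMat μ e d * MAᵀ) i j
          + (σ * σ) * (Mt * covMat μ e e * Mtᵀ) i j
          + (-σ * τ) * (Mt * covMat μ e et * Gᵀ) i j
          + τ * (G * covMat μ et d * MAᵀ) i j
          + (τ * -σ) * (G * covMat μ et e * Mtᵀ) i j
          + (τ * τ) * (G * covMat μ et et * Gᵀ) i j := by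
      show (∫ ω, d' ω i * d' ω j ∂μ) = _
      rw [show (fun ω => d' ω i * d' ω j) = _ from hexp]
      rw [integral_add9
        (aux_integrable_mulVec_mul MA MA d d hdL2 hdL2 i j)
        ((aux_integrable_mulVec_mul MA Mt d e hdL2 heL2 i j).const_mul _)
        ((aux_integrable_mulVec_mul MA G d et hdL2 hetL2 i j).const_mul _)
        ((aux_integrable_mulVec_mul Mt MA e d heL2 hdL2 i j).const_mul _)
        ((aux_integrable_mulVec_mul Mt Mt e e heL2 heL2 i j).const_mul _)
        ((aux_integrable_mulVec_mul Mt G e et heL2 hetL2 i j).const_mul _)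
        ((aux_integrable_mulVec_mul G MA et d hetL2 hdL2 i j).const_mul _)
        ((aux_integrable_mulVec_mul G Mt et e hetL2 heL2 i j).const_mul _)
        ((aux_integrable_mulVec_mul G G et et hetL2 hetL2 i j).const_mul _)]
      rw [integral_const_mul _ _, integral_const_mul _ _, integral_const_mul _ _, integral_const_mul _ _,
          integral_const_mul _ _, integral_const_mul _ _, integral_const_mul _ _, integral_const_mul _ _]
      rw [aux_integral_mulVec_mul MA MA d d hdL2 hdL2 i j,
          aux_integral_mulVec_mul MA Mt d e hdL2 heL2 i j,
          aux_integral_mulVec_mul MA G d et hdL2 hetL2 i j,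
          aux_integral_mulVec_mul Mt MA e d heL2 hdL2 i j,
          aux_integral_mulVec_mul Mt Mt e e heL2 heL2 i j,
          aux_integral_mulVec_mul Mt G e et heL2 hetL2 i j,
          aux_integral_mulVec_mul G MA et d hetL2 hdL2 i j,
          aux_integral_mulVec_mul G Mt et e hetL2 heL2 i j,
          aux_integral_mulVec_mul G G et et hetL2 hetL2 i j]
    rw [covEq, hdCov, heCov, hetCov, hde, hdet, heet, hed, hetd, hete]
    simp only [Matrix.mul_zero, Matrix.zero_mul, Matrix.zero_apply, mul_zero, add_zero, zero_add,
      Matrix.mul_one]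
    have hmat : MA * aeval S p * MAᵀ + (σ * σ) • (Mt * Mtᵀ) + (τ * τ) • (G * Gᵀ)
        = aeval S ((1 - g * b) ^ 2 * (a ^ 2 * p + C (σ ^ 2)) + C (τ ^ 2) * g ^ 2) := by
      rw [hMA, hMt, hG, aeval_transpose hS, aeval_transpose hS, aeval_transpose hS]
      rw [← _root_.map_mul, ← _root_.map_mul, ← _root_.map_mul, ← _root_.map_mul]
      have hs1 : (σ * σ) • (aeval S ((1 - g * b) * (1 - g * b)))
          = aeval S (C (σ * σ) * ((1 - g * b) * (1 - g * b))) := by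
        rw [_root_.map_mul (aeval S) (C (σ * σ)), aeval_C, Algebra.smul_def]
      have hs2 : (τ * τ) • (aeval S (g * g)) = aeval S (C (τ * τ) * (g * g)) := by
        rw [_root_.map_mul (aeval S) (C (τ * τ)), aeval_C, Algebra.smul_def]
      rw [hs1, hs2, ← _root_.map_add, ← _root_.map_add]
      congr 1
      have h1 : σ * σ = σ ^ 2 := (sq σ).symm
      have h2 : τ * τ = τ ^ 2 := (sq τ).symm
      rw [h1, h2]
      ring
    rw [← hmat]
    simp [Matrix.add_apply, Matrix.smul_apply, smul_eq_mul]
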